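/- arXiv:2603.07273 — 3 statements merged into one kernel-verified Lean document; each statement's English description precedes it below -/
import Mathlib

section
/- Basu's theorem: Let 𝒫 = {P_θ : θ ∈ Θ} be a family of probability measures on a measurable space (𝒳, 𝒜), let T be a statistic that is sufficient and boundedly complete for 𝒫, and let W be an ancillary statistic (the law of W under P_θ does not depend on θ). Then W is independent of T under every P_θ, θ ∈ Θ. -/
open MeasureTheory ProbabilityTheory Set
open scoped NNReal

/-! Sufficiency provides a single function `φ` of `T` that is a version of `P θ[1_{W ∈ B} | T]`
for every `θ`. Its mean `P θ (W ∈ B)` does not depend on `θ` by ancillarity, so bounded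
completeness forces `φ ∘ T` to be almost surely the constant `P (W ∈ B)`. A conditional
probability given `T` that is almost surely constant is exactly independence from `T`. -/

section Statistic

variable {Ω 𝒯 Θ : Type*} [MeasurableSpace Ω] [MeasurableSpace 𝒯]

def IsSufficientStatistic (P : Θ → Measure Ω) (T : Ω → 𝒯) : Prop :=
  ∀ f : Ω → ℝ, Measurable f → (∃ C, ∀ ω, |f ω| ≤ C) →
    ∃ g : Ω → ℝ,
      StronglyMeasurable[MeasurableSpace.comap T inferInstance] g ∧
      ∀ θ, (P θ)[f | MeasurableSpace.comap T inferInstance] =ᵐ[P θ] g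

def IsBoundedlyComplete (P : Θ → Measure Ω) (T : Ω → 𝒯) : Prop :=
  ∀ g : 𝒯 → ℝ, Measurable g → (∃ C, ∀ t, |g t| ≤ C) →
    (∀ θ, ∫ ω, g (T ω) ∂(P θ) = 0) → ∀ θ, (fun ω => g (T ω)) =ᵐ[P θ] (0 : Ω → ℝ)

variable {P : Θ → Measure Ω} {T : Ω → 𝒯}

/-- The version given by sufficiency factors through `T` (Doob–Dynkin), and clipping the factor
to `[-C, C]` keeps it a version because the conditional expectations are bounded by `C`. -/
theorem IsSufficientStatistic.exists_bounded_version (hsuff : IsSufficientStatistic P T)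
    {f : Ω → ℝ} (hf : Measurable f) {C : ℝ≥0} (hfC : ∀ ω, |f ω| ≤ C) :
    ∃ φ : 𝒯 → ℝ, Measurable φ ∧ (∀ t, |φ t| ≤ C) ∧
      ∀ θ, (P θ)[f | MeasurableSpace.comap T inferInstance] =ᵐ[P θ] φ ∘ T := by
  obtain ⟨g, hg, hgf⟩ := hsuff f hf ⟨C, hfC⟩
  obtain ⟨φ, hφ, rfl⟩ := hg.exists_eq_measurable_comp
  have hC : -(C : ℝ) ≤ C := neg_le_self C.coe_nonneg
  refine ⟨fun t => projIcc (-(C : ℝ)) C hC (φ t), ?_, fun t => abs_le.mpr (projIcc _ _ hC _).2,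
    fun θ => ?_⟩
  · exact (continuous_subtype_val.comp continuous_projIcc).measurable.comp hφ.measurable
  · filter_upwards [hgf θ, ae_bdd_abs_condExp_of_ae_bdd_abs (ae_of_all (P θ) hfC)]
      with ω hversion hbound
    rw [hversion] at hbound ⊢
    exact congrArg Subtype.val (projIcc_of_mem hC (abs_le.mp hbound)).symm

theorem IsBoundedlyComplete.ae_eq_const_of_integral_eq (hcomplete : IsBoundedlyComplete P T)
    [∀ θ, IsProbabilityMeasure (P θ)] (hT : Measurable T) {φ : 𝒯 → ℝ} (hφ : Measurable φ)
    {C : ℝ} (hφC : ∀ t, |φ t| ≤ C) {c : ℝ} (hmean : ∀ θ, ∫ ω, φ (T ω) ∂(P θ) = c) (θ : Θ) :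
    φ ∘ T =ᵐ[P θ] fun _ => c := by
  have hcentered : ∀ θ, ∫ ω, (φ (T ω) - c) ∂(P θ) = 0 := fun θ => by
    have hint : Integrable (fun ω => φ (T ω)) (P θ) :=
      .of_bound (hφ.comp hT).aestronglyMeasurable C (ae_of_all _ fun ω => hφC (T ω))
    rw [integral_sub hint (integrable_const c), integral_const, hmean θ]
    simp
  filter_upwards [hcomplete (fun t => φ t - c) (hφ.sub measurable_const)
    ⟨C + |c|, fun t => (abs_sub _ _).trans (add_le_add_left (hφC t) _)⟩ hcentered θ] with ω hω
  exact sub_eq_zero.mp hω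

theorem condExp_ae_eq_const_of_integral_eq [∀ θ, IsProbabilityMeasure (P θ)]
    (hT : Measurable T) (hsuff : IsSufficientStatistic P T) (hcomplete : IsBoundedlyComplete P T)
    {f : Ω → ℝ} (hf : Measurable f) {C : ℝ≥0} (hfC : ∀ ω, |f ω| ≤ C) {c : ℝ}
    (hmean : ∀ θ, ∫ ω, f ω ∂(P θ) = c) (θ : Θ) :
    (P θ)[f | MeasurableSpace.comap T inferInstance] =ᵐ[P θ] fun _ => c := by
  obtain ⟨φ, hφ, hφC, hversion⟩ := hsuff.exists_bounded_version hf hfC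
  have hφmean : ∀ θ, ∫ ω, φ (T ω) ∂(P θ) = c := fun θ => by
    rw [← hmean θ, ← integral_condExp hT.comap_le (f := f)]
    exact integral_congr_ae (hversion θ).symm
  exact (hversion θ).trans (hcomplete.ae_eq_const_of_integral_eq hT hφ hφC hφmean θ)

end Statistic

theorem ProbabilityTheory.indep_of_condExp_indicator_ae_eq_const {Ω : Type*}
    {m m' m₀ : MeasurableSpace Ω} {μ : Measure Ω} [IsFiniteMeasure μ] (hm : m ≤ m₀)
    (hm' : m' ≤ m₀)
    (h : ∀ t, MeasurableSet[m'] t → μ[t.indicator 1 | m] =ᵐ[μ] fun _ => μ.real t) :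
    Indep m m' μ := by
  refine (Indep_iff m m' μ).2 fun s t hs ht => ?_
  have hreal : μ.real (s ∩ t) = μ.real s * μ.real t :=
    calc μ.real (s ∩ t) = ∫ ω in s, t.indicator 1 ω ∂μ := by
          rw [integral_indicator_one (hm' t ht), measureReal_restrict_apply (hm' t ht), inter_comm]
      _ = ∫ ω in s, μ[t.indicator 1 | m] ω ∂μ :=
          (setIntegral_condExp hm ((integrable_const 1).indicator (hm' t ht)) hs).symm
      _ = ∫ _ in s, μ.real t ∂μ := setIntegral_congr_ae (hm s hs) ((h t ht).mono fun _ h _ => h)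
      _ = μ.real s * μ.real t := by rw [setIntegral_const, smul_eq_mul]
  rwa [measureReal_def, measureReal_def, measureReal_def, ← ENNReal.toReal_mul,
    ENNReal.toReal_eq_toReal_iff' (measure_ne_top _ _)
      (ENNReal.mul_ne_top (measure_ne_top _ _) (measure_ne_top _ _))] at hreal

/-- Basu's theorem: if `T` is sufficient and boundedly complete for the family
`{P θ}` and `W` is ancillary, then `W` is independent of `T` under every `P θ`. -/
theorem basu_theorem
    {Ω 𝒯 𝒲 Θ : Type*} [MeasurableSpace Ω] [MeasurableSpace 𝒯] [MeasurableSpace 𝒲]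
    (P : Θ → Measure Ω) (hP : ∀ θ, IsProbabilityMeasure (P θ))
    (T : Ω → 𝒯) (W : Ω → 𝒲) (hT : Measurable T) (hW : Measurable W)
    -- sufficiency: conditional expectations given σ(T) admit versions not depending on θ
    (hsuff : ∀ f : Ω → ℝ, Measurable f → (∃ C, ∀ ω, |f ω| ≤ C) →
      ∃ g : Ω → ℝ,
        StronglyMeasurable[MeasurableSpace.comap T inferInstance] g ∧
        ∀ θ, (P θ)[f | MeasurableSpace.comap T inferInstance] =ᵐ[P θ] g)
    -- bounded completeness of T
    (hcomplete : ∀ g : 𝒯 → ℝ, Measurable g → (∃ C, ∀ t, |g t| ≤ C) →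
      (∀ θ, ∫ ω, g (T ω) ∂(P θ) = 0) → ∀ θ, (fun ω => g (T ω)) =ᵐ[P θ] (0 : Ω → ℝ))
    -- ancillarity of W
    (hanc : ∀ θ θ', (P θ).map W = (P θ').map W) :
    ∀ θ, IndepFun T W (P θ) := by
  intro θ₀
  have := hP
  refine (IndepFun_iff_Indep T W _).2
    (indep_of_condExp_indicator_ae_eq_const hT.comap_le hW.comap_le ?_)
  rintro _ ⟨B, hB, rfl⟩
  have hmean : ∀ θ, ∫ ω, (W ⁻¹' B).indicator 1 ω ∂(P θ) = (P θ₀).real (W ⁻¹' B) := fun θ => by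
    rw [integral_indicator_one (hW hB), ← map_measureReal_apply hW hB, hanc,
      map_measureReal_apply hW hB]
  have hbound : ∀ ω, |(W ⁻¹' B).indicator 1 ω| ≤ ((1 : ℝ≥0) : ℝ) := fun ω => by
    by_cases h : ω ∈ W ⁻¹' B <;> simp [h]
  exact condExp_ae_eq_const_of_integral_eq hT hsuff hcomplete
    (measurable_one.indicator (hW hB)) hbound hmean θ₀
end

section
/- Basu's first theorem (for mutually absolutely continuous families): Let 𝒫 = {P_θ : θ ∈ Θ} be a family of pairwise mutually absolutely continuous probability measures on (𝒳, 𝒜) and let S be a sufficient statistic for 𝒫. If a statistic W is independent of S under P_θ for every θ ∈ Θ, then W is ancillary: its distribution under P_θ is the same for all θ. -/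
open MeasureTheory ProbabilityTheory
open scoped NNReal ENNReal BigOperators

/-!
Fix a bounded `σ(W)`-measurable `f`. By independence of `W` and `S`, under each `P θ` the
conditional expectation of `f` given `σ(S)` is the constant `∫ f ∂P θ`; by sufficiency these
conditional expectations have a common version `g`. Mutual absolute continuity lets us compare
the constants `∫ f ∂P θ` and `∫ f ∂P θ'` on one common non-null set where both equal `g`, so they
agree. Taking `f` an indicator of `W ⁻¹' B` shows that the law of `W` does not depend on `θ`.
-/

theorem eq_of_ae_eq_const_of_absolutelyContinuous {Ω β : Type*} [MeasurableSpace Ω]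
    {μ ν : Measure Ω} [NeZero μ] (hμν : μ ≪ ν) {g : Ω → β} {a b : β}
    (ha : g =ᵐ[μ] fun _ => a) (hb : g =ᵐ[ν] fun _ => b) : a = b := by
  have hab : ∀ᵐ _ ∂μ, a = b := by
    filter_upwards [ha, hμν.ae_le hb] with ω hωa hωb
    rw [← hωa, ← hωb]
  exact Filter.eventually_const.mp hab

theorem integral_eq_of_indep_of_condExp_ae_eq {Ω : Type*} {m m' mΩ : MeasurableSpace Ω}
    (hm : m ≤ mΩ) (hm' : m' ≤ mΩ) {μ ν : Measure Ω} [IsProbabilityMeasure μ]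
    [IsProbabilityMeasure ν] (hμν : μ ≪ ν) (hμ : Indep m' m μ) (hν : Indep m' m ν)
    {f g : Ω → ℝ} (hf : StronglyMeasurable[m'] f)
    (hgμ : μ[f | m] =ᵐ[μ] g) (hgν : ν[f | m] =ᵐ[ν] g) :
    ∫ ω, f ω ∂μ = ∫ ω, f ω ∂ν :=
  eq_of_ae_eq_const_of_absolutelyContinuous hμν
    (hgμ.symm.trans (condExp_indep_eq hm' hm hf hμ))
    (hgν.symm.trans (condExp_indep_eq hm' hm hf hν))

/-- Basu's first theorem for mutually absolutely continuous families: if `S` is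
sufficient and the statistic `W` is independent of `S` under every `P θ`, then `W`
is ancillary: its law under `P θ` does not depend on `θ`. -/
theorem basu_first_theorem
    {Ω 𝒮 𝒲 Θ : Type*} [MeasurableSpace Ω] [MeasurableSpace 𝒮] [MeasurableSpace 𝒲]
    (P : Θ → Measure Ω) (hP : ∀ θ, IsProbabilityMeasure (P θ))
    (hac : ∀ θ θ', P θ ≪ P θ')
    (S : Ω → 𝒮) (W : Ω → 𝒲) (hS : Measurable S) (hW : Measurable W)
    -- sufficiency of S
    (hsuff : ∀ f : Ω → ℝ, Measurable f → (∃ C, ∀ ω, |f ω| ≤ C) →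
      ∃ g : Ω → ℝ,
        StronglyMeasurable[MeasurableSpace.comap S inferInstance] g ∧
        ∀ θ, (P θ)[f | MeasurableSpace.comap S inferInstance] =ᵐ[P θ] g)
    -- W independent of S under every P θ
    (hindep : ∀ θ, IndepFun S W (P θ)) :
    ∀ θ θ', (P θ).map W = (P θ').map W := by
  intro θ θ'
  have := hP θ
  have := hP θ'
  ext B hB
  have hWB : MeasurableSet (W ⁻¹' B) := hW hB
  obtain ⟨g, -, hg⟩ := hsuff ((W ⁻¹' B).indicator 1) (measurable_one.indicator hWB)
    ⟨1, fun ω => by simpa using norm_indicator_le_norm_self (1 : Ω → ℝ) ω⟩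
  have hint := integral_eq_of_indep_of_condExp_ae_eq hS.comap_le hW.comap_le (hac θ θ')
    (hindep θ).symm (hindep θ').symm
    (stronglyMeasurable_one.indicator ⟨B, hB, rfl⟩) (hg θ) (hg θ')
  rwa [integral_indicator_one hWB, integral_indicator_one hWB,
    measureReal_eq_measureReal_iff, ← Measure.map_apply hW hB,
    ← Measure.map_apply hW hB] at hint
end

section
/- Basu's third theorem (maximal ancillarity criterion): Let 𝒫 be a family of mutually absolutely continuous probability measures on (Ω, 𝒜). Let 𝒜_suff ⊆ 𝒜 be a boundedly complete and sufficient sub-σ-field for 𝒫, and let 𝒜_anc ⊆ 𝒜 be an ancillary sub-σ-field containing all 𝒫-null sets such that σ(𝒜_suff ∪ 𝒜_anc) = 𝒜. Then 𝒜_anc is maximal ancillary: any ancillary sub-σ-field 𝒜' ⊆ 𝒜 containing 𝒜_anc equals 𝒜_anc (up to 𝒫-null sets). -/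
/-!
By Basu's theorem every ancillary event is independent of the boundedly complete sufficient
σ-field `𝒜_suff`; common versions of conditional probabilities given `𝒜_suff` propagate from
`𝒜_anc`-events to all of `𝒜 = 𝒜_suff ⊔ 𝒜_anc` by a π-λ argument over rectangles `A ∩ B`.
Now let `𝒜' ⊇ 𝒜_anc` be ancillary, `s ∈ 𝒜'`, and `f = P(s | 𝒜_anc)` for one fixed `P`. For
`A ∈ 𝒜_suff`, `B ∈ 𝒜_anc`, both `P(s ∩ A ∩ B)` and `∫_{A ∩ B} f dP` factor as `P(A) P(s ∩ B)`,
so `f` is also the conditional probability of `s` given all of `𝒜`, i.e. `1_s = f` a.s., and `s`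
agrees a.s. with the `𝒜_anc`-event `{f = 1}`. Mutual absolute continuity carries the null set
over to every `P ∈ 𝒫`.
-/

open MeasureTheory ProbabilityTheory
open Function
open scoped ENNReal symmDiff

section

variable {Ω : Type*}

def measurableRectangles (m₁ m₂ : MeasurableSpace Ω) : Set (Set Ω) :=
  Set.image2 (· ∩ ·) {A | MeasurableSet[m₁] A} {B | MeasurableSet[m₂] B}

lemma isPiSystem_measurableRectangles (m₁ m₂ : MeasurableSpace Ω) :
    IsPiSystem (measurableRectangles m₁ m₂) := by
  rintro _ ⟨A₁, hA₁, B₁, hB₁, rfl⟩ _ ⟨A₂, hA₂, B₂, hB₂, rfl⟩ -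
  exact ⟨A₁ ∩ A₂, hA₁.inter hA₂, B₁ ∩ B₂, hB₁.inter hB₂,
    (Set.inter_inter_inter_comm A₁ B₁ A₂ B₂).symm⟩

lemma generateFrom_measurableRectangles (m₁ m₂ : MeasurableSpace Ω) :
    MeasurableSpace.generateFrom (measurableRectangles m₁ m₂) = m₁ ⊔ m₂ := by
  refine le_antisymm (MeasurableSpace.generateFrom_le ?_) (sup_le (fun A hA => ?_) fun B hB => ?_)
  · rintro _ ⟨A, hA, B, hB, rfl⟩
    exact (le_sup_left (b := m₂) A hA).inter (le_sup_right (a := m₁) B hB)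
  · exact MeasurableSpace.measurableSet_generateFrom ⟨A, hA, Set.univ, .univ, Set.inter_univ A⟩
  · exact MeasurableSpace.measurableSet_generateFrom ⟨Set.univ, .univ, B, hB, Set.univ_inter B⟩

lemma measure_symmDiff_preimage_one_eq_zero {M : Type*} [Zero M] [One M] [NeZero (1 : M)]
    {_ : MeasurableSpace Ω} {μ : Measure Ω} {s : Set Ω} {f : Ω → M}
    (hf : s.indicator 1 =ᵐ[μ] f) : μ (s ∆ (f ⁻¹' {1})) = 0 := by
  refine measure_mono_null (fun ω hω => ?_) (ae_iff.1 hf)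
  rcases hω with ⟨hωs, hωf⟩ | ⟨hωf, hωs⟩
  · intro h
    rw [Set.indicator_of_mem hωs, Pi.one_apply] at h
    exact hωf h.symm
  · intro h
    rw [Set.indicator_of_notMem hωs, show f ω = 1 from hωf] at h
    exact zero_ne_one h

def IsCondProb (m : MeasurableSpace Ω) {mΩ : MeasurableSpace Ω} (μ : Measure Ω) (s : Set Ω)
    (f : Ω → ℝ≥0∞) : Prop :=
  Measurable[m] f ∧ ∀ A, MeasurableSet[m] A → ∫⁻ ω in A, f ω ∂μ = μ (s ∩ A)

lemma isCondProb_ofReal_of_condExp_ae_eq {m mΩ : MeasurableSpace Ω} {μ : Measure Ω}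
    [IsFiniteMeasure μ] {s : Set Ω} {g : Ω → ℝ} (hm : m ≤ mΩ) (hs : MeasurableSet s)
    (hg : Measurable[m] g) (hcond : μ[s.indicator 1 | m] =ᵐ[μ] g) :
    IsCondProb m μ s (fun ω => ENNReal.ofReal (g ω)) := by
  have hint : Integrable (s.indicator (1 : Ω → ℝ)) μ := (integrable_const 1).indicator hs
  have hg_nonneg : 0 ≤ᵐ[μ] g := by
    have h_ind : 0 ≤ᵐ[μ] s.indicator (1 : Ω → ℝ) :=
      ae_of_all μ (Set.indicator_nonneg fun _ _ => zero_le_one)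
    filter_upwards [hcond, condExp_nonneg (m := m) h_ind] with ω hω h0
    exact hω ▸ h0
  refine ⟨ENNReal.measurable_ofReal.comp hg, fun A hA => ?_⟩
  rw [← ofReal_integral_eq_lintegral_ofReal (integrable_condExp.congr hcond).integrableOn
      (ae_restrict_of_ae hg_nonneg), ← integral_congr_ae (ae_restrict_of_ae hcond),
    setIntegral_condExp hm hint hA, setIntegral_indicator hs, Set.inter_comm]
  simp

namespace IsCondProb

section

variable {m mΩ : MeasurableSpace Ω} {μ : Measure Ω} {s : Set Ω} {f : Ω → ℝ≥0∞}

lemma ae_le_one [IsFiniteMeasure μ] (hm : m ≤ mΩ) (h : IsCondProb m μ s f) :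
    ∀ᵐ ω ∂μ, f ω ≤ 1 := by
  refine ae_le_of_ae_le_trim (hm := hm)
    (ae_le_of_forall_setLIntegral_le_of_sigmaFinite h.1 fun A hA _ => ?_)
  rw [setLIntegral_trim hm h.1 hA, setLIntegral_trim hm measurable_const hA, h.2 A hA,
    setLIntegral_const, one_mul]
  exact measure_mono Set.inter_subset_right

lemma min_one [IsFiniteMeasure μ] (hm : m ≤ mΩ) (h : IsCondProb m μ s f) :
    IsCondProb m μ s (fun ω => min (f ω) 1) := by
  refine ⟨h.1.min measurable_const, fun A hA => ?_⟩
  rw [← h.2 A hA]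
  refine setLIntegral_congr_fun_ae (hm A hA) ?_
  filter_upwards [h.ae_le_one hm] with ω hω _ using min_eq_left hω

lemma integral_toReal [IsFiniteMeasure μ] (hm : m ≤ mΩ) (h : IsCondProb m μ s f) :
    ∫ ω, (f ω).toReal ∂μ = μ.real s := by
  rw [MeasureTheory.integral_toReal (h.1.mono hm le_rfl).aemeasurable, ← setLIntegral_univ,
    h.2 _ .univ, Set.inter_univ, measureReal_def]
  filter_upwards [h.ae_le_one hm] with ω hω using hω.trans_lt ENNReal.one_lt_top

lemma compl [IsFiniteMeasure μ] (hm : m ≤ mΩ) (hs : MeasurableSet s) (h : IsCondProb m μ s f) :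
    IsCondProb m μ sᶜ (fun ω => 1 - f ω) := by
  refine ⟨measurable_const.sub h.1, fun A hA => ?_⟩
  have hfin : ∫⁻ ω in A, f ω ∂μ ≠ ∞ := by rw [h.2 A hA]; exact measure_ne_top _ _
  rw [lintegral_sub (h.1.mono hm le_rfl) hfin (ae_restrict_of_ae (h.ae_le_one hm)),
    setLIntegral_const, one_mul, h.2 A hA, ← measure_sdiff Set.inter_subset_right
      (hs.inter (hm A hA)).nullMeasurableSet (measure_ne_top _ _), Set.sdiff_inter_self_eq_sdiff,
    Set.sdiff_eq_compl_inter]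

lemma iUnion {ι : Type*} [Countable ι] {s : ι → Set Ω} {f : ι → Ω → ℝ≥0∞} (hm : m ≤ mΩ)
    (hs : ∀ i, MeasurableSet (s i)) (hd : Pairwise (Disjoint on s))
    (h : ∀ i, IsCondProb m μ (s i) (f i)) :
    IsCondProb m μ (⋃ i, s i) (fun ω => ∑' i, f i ω) := by
  have hf : Measurable[m] fun ω => ∑' i, f i ω := by
    let := m
    exact Measurable.tsum fun i => (h i).1
  refine ⟨hf, fun A hA => ?_⟩
  rw [lintegral_tsum fun i => ((h i).1.mono hm le_rfl).aemeasurable, Set.iUnion_inter,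
    measure_iUnion (fun i j hij => (hd hij).mono Set.inter_subset_left Set.inter_subset_left)
      fun i => (hs i).inter (hm A hA)]
  exact tsum_congr fun i => (h i).2 A hA

lemma inter_left {A : Set Ω} (hm : m ≤ mΩ) (hA : MeasurableSet[m] A) (h : IsCondProb m μ s f) :
    IsCondProb m μ (A ∩ s) (A.indicator f) := by
  refine ⟨h.1.indicator hA, fun B hB => ?_⟩
  rw [setLIntegral_indicator (hm A hA), h.2 _ (hA.inter hB)]
  congr 1
  ac_rfl

lemma indicator_ae_eq [SigmaFinite μ] (hs : MeasurableSet s) (h : IsCondProb mΩ μ s f) :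
    s.indicator 1 =ᵐ[μ] f :=
  ae_eq_of_forall_setLIntegral_eq_of_sigmaFinite (measurable_one.indicator hs) h.1
    fun A hA _ => by
      rw [setLIntegral_indicator hs, h.2 A hA]
      simp

end

variable {m₁ m₂ n mΩ : MeasurableSpace Ω} {μ : Measure Ω} {s : Set Ω} {f : Ω → ℝ≥0∞}

lemma of_indep_sup [IsProbabilityMeasure μ] (h₁₂ : m₁ ≤ m₂) (h₂ : m₂ ≤ mΩ)
    (hgen : n ⊔ m₁ = mΩ) (hind : Indep m₂ n μ) (hs : MeasurableSet[m₂] s)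
    (h : IsCondProb m₁ μ s f) : IsCondProb mΩ μ s f := by
  have hn : n ≤ mΩ := hgen ▸ le_sup_left
  have hf : Measurable f := h.1.mono (h₁₂.trans h₂) le_rfl
  have hfin : ∫⁻ ω, f ω ∂μ ≠ ∞ := by
    rw [← setLIntegral_univ, h.2 _ .univ]; exact measure_ne_top _ _
  have : IsFiniteMeasure (μ.withDensity f) := isFiniteMeasure_withDensity hfin
  have hrect : ∀ A, MeasurableSet[n] A → ∀ B, MeasurableSet[m₁] B →
      μ.restrict s (A ∩ B) = μ.withDensity f (A ∩ B) := by
    intro A hA B hB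
    have hAB : MeasurableSet (A ∩ B) := (hn A hA).inter (h₁₂.trans h₂ B hB)
    rw [Measure.restrict_apply hAB, withDensity_apply _ hAB, ← lintegral_indicator hAB]
    calc μ (A ∩ B ∩ s) = μ (A ∩ (s ∩ B)) := by congr 1; ac_rfl
      _ = μ A * μ (s ∩ B) :=
          (Indep_iff _ _ _).1 hind.symm _ _ hA (hs.inter (h₁₂ B hB))
      _ = (∫⁻ ω, A.indicator 1 ω ∂μ) * ∫⁻ ω, B.indicator f ω ∂μ := by
          rw [lintegral_indicator_one (hn A hA), lintegral_indicator (h₁₂.trans h₂ B hB),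
            h.2 B hB]
      _ = ∫⁻ ω, A.indicator 1 ω * B.indicator f ω ∂μ :=
          (lintegral_mul_eq_lintegral_mul_lintegral_of_independent_measurableSpace hn h₂
            hind.symm (measurable_const.indicator hA) ((h.1.indicator hB).mono h₁₂ le_rfl)).symm
      _ = ∫⁻ ω, (A ∩ B).indicator f ω ∂μ := by
          simp_rw [← Set.inter_indicator_mul, Pi.one_apply, one_mul]
  have hext : μ.restrict s = μ.withDensity f := by
    refine ext_of_generate_finite (measurableRectangles n m₁)
      (by rw [generateFrom_measurableRectangles, hgen]) (isPiSystem_measurableRectangles n m₁)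
      ?_ (by simpa using hrect _ .univ _ .univ)
    rintro _ ⟨A, hA, B, hB, rfl⟩
    exact hrect A hA B hB
  refine ⟨hf, fun A hA => ?_⟩
  rw [← withDensity_apply _ hA, ← hext, Measure.restrict_apply hA, Set.inter_comm]

end IsCondProb

lemma exists_measurableSet_measure_symmDiff_eq_zero_of_indep {m₁ m₂ n mΩ : MeasurableSpace Ω}
    {μ : Measure Ω} [IsProbabilityMeasure μ] (h₁₂ : m₁ ≤ m₂) (h₂ : m₂ ≤ mΩ)
    (hgen : n ⊔ m₁ = mΩ) (hind : Indep m₂ n μ) {s : Set Ω} (hs : MeasurableSet[m₂] s) :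
    ∃ t, MeasurableSet[m₁] t ∧ μ (s ∆ t) = 0 := by
  have hcond := isCondProb_ofReal_of_condExp_ae_eq (μ := μ) (h₁₂.trans h₂) (h₂ s hs)
    stronglyMeasurable_condExp.measurable Filter.EventuallyEq.rfl
  refine ⟨_, (hcond.1 (MeasurableSet.singleton 1)), measure_symmDiff_preimage_one_eq_zero ?_⟩
  exact (hcond.of_indep_sup h₁₂ h₂ hgen hind hs).indicator_ae_eq (h₂ s hs)

section Family

variable {Θ : Type*}

/-- Sufficiency of `m` for `P`, restricted to the single event `s`. -/
def HasCommonCondProb (m : MeasurableSpace Ω) {mΩ : MeasurableSpace Ω} (P : Θ → Measure Ω)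
    (s : Set Ω) : Prop :=
  ∃ f, ∀ θ, IsCondProb m (P θ) s f

def BoundedlyComplete (m : MeasurableSpace Ω) {mΩ : MeasurableSpace Ω} (P : Θ → Measure Ω) :
    Prop :=
  ∀ Y : Ω → ℝ, Measurable[m] Y → (∃ C, ∀ ω, |Y ω| ≤ C) →
    (∀ θ, ∫ ω, Y ω ∂(P θ) = 0) → ∀ θ, Y =ᵐ[P θ] (0 : Ω → ℝ)

def IsAncillary (m : MeasurableSpace Ω) {mΩ : MeasurableSpace Ω} (P : Θ → Measure Ω) : Prop :=
  ∀ s, MeasurableSet[m] s → ∀ θ θ', P θ s = P θ' s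

variable {m n mΩ : MeasurableSpace Ω} {P : Θ → Measure Ω} {s : Set Ω}

namespace HasCommonCondProb

lemma of_condExp_ae_eq [∀ θ, IsFiniteMeasure (P θ)] (hm : m ≤ mΩ) (hs : MeasurableSet s)
    {g : Ω → ℝ} (hg : StronglyMeasurable[m] g) (hcond : ∀ θ, (P θ)[s.indicator 1 | m] =ᵐ[P θ] g) :
    HasCommonCondProb m P s :=
  ⟨_, fun θ => isCondProb_ofReal_of_condExp_ae_eq hm hs hg.measurable (hcond θ)⟩

lemma exists_le_one [∀ θ, IsFiniteMeasure (P θ)] (hm : m ≤ mΩ) (h : HasCommonCondProb m P s) :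
    ∃ f, (∀ θ, IsCondProb m (P θ) s f) ∧ ∀ ω, f ω ≤ 1 :=
  let ⟨_, hf⟩ := h
  ⟨_, fun θ => (hf θ).min_one hm, fun _ => min_le_right _ _⟩

lemma of_sup [∀ θ, IsFiniteMeasure (P θ)] (hm : m ≤ mΩ) (hgen : m ⊔ n = mΩ)
    (hn : ∀ B, MeasurableSet[n] B → HasCommonCondProb m P B) (hs : MeasurableSet s) :
    HasCommonCondProb m P s := by
  induction s, hs using MeasurableSpace.induction_on_inter
    (by rw [generateFrom_measurableRectangles, hgen]) (isPiSystem_measurableRectangles m n) with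
  | empty => exact ⟨0, fun θ => ⟨measurable_const, fun A _ => by simp⟩⟩
  | basic _ hu =>
    obtain ⟨A, hA, B, hB, rfl⟩ := hu
    obtain ⟨f, hf⟩ := hn B hB
    exact ⟨_, fun θ => (hf θ).inter_left hm hA⟩
  | compl u hu ih =>
    obtain ⟨f, hf⟩ := ih
    exact ⟨_, fun θ => (hf θ).compl hm hu⟩
  | iUnion u hd hu ih =>
    choose f hf using ih
    exact ⟨_, fun θ => IsCondProb.iUnion hm hu hd fun i => hf i θ⟩

end HasCommonCondProb

/-- Basu's theorem. The common conditional probability of `B` has the same mean `P θ B` under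
every `P θ`, so by bounded completeness it is a.s. constant. -/
lemma measure_inter_eq_mul_of_boundedlyComplete [∀ θ, IsProbabilityMeasure (P θ)]
    (hm : m ≤ mΩ) (hcomplete : BoundedlyComplete m P) {B : Set Ω} (hB : HasCommonCondProb m P B)
    (hanc : ∀ θ θ', P θ B = P θ' B) (θ : Θ) {A : Set Ω} (hA : MeasurableSet[m] A) :
    P θ (B ∩ A) = P θ B * P θ A := by
  obtain ⟨f, hf, hf_le⟩ := hB.exists_le_one hm
  set c := (P θ B).toReal
  have hf_norm : ∀ ω, ‖(f ω).toReal‖ ≤ 1 := fun ω => by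
    simpa using ENNReal.toReal_mono ENNReal.one_ne_top (hf_le ω)
  have hf_int : ∀ θ', Integrable (fun ω => (f ω).toReal) (P θ') := fun θ' =>
    (integrable_const (1 : ℝ)).mono' ((hf θ').1.mono hm le_rfl).ennreal_toReal.aestronglyMeasurable
      (ae_of_all _ hf_norm)
  have hY := hcomplete (fun ω => (f ω).toReal - c) ((hf θ).1.ennreal_toReal.sub measurable_const)
    ⟨1 + |c|, fun ω => ?_⟩ (fun θ' => ?_) θ
  · have hfc : ∀ᵐ ω ∂P θ, ω ∈ A → f ω = P θ B := by
      filter_upwards [hY] with ω hω _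
      rw [← ENNReal.ofReal_toReal ((hf_le ω).trans_lt ENNReal.one_lt_top).ne,
        ← ENNReal.ofReal_toReal (measure_ne_top (P θ) B), sub_eq_zero.1 hω]
    rw [← (hf θ).2 A hA, setLIntegral_congr_fun_ae (hm A hA) hfc, setLIntegral_const]
  · exact (abs_sub _ _).trans (by linarith [hf_norm ω, Real.norm_eq_abs (f ω).toReal])
  · rw [integral_sub (hf_int θ') (integrable_const c), (hf θ').integral_toReal hm,
      integral_const, measureReal_def, hanc θ' θ]
    simp [c]

lemma indep_of_boundedlyComplete [∀ θ, IsProbabilityMeasure (P θ)] {m' : MeasurableSpace Ω}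
    (hm : m ≤ mΩ) (hcomplete : BoundedlyComplete m P) (hanc : IsAncillary m' P)
    (hcommon : ∀ B, MeasurableSet[m'] B → HasCommonCondProb m P B) (θ : Θ) :
    Indep m' m (P θ) :=
  (Indep_iff _ _ _).2 fun _ _ hB hA =>
    measure_inter_eq_mul_of_boundedlyComplete hm hcomplete (hcommon _ hB) (hanc _ hB) θ hA

end Family

end

theorem basu_third_theorem_general
    {Ω Θ : Type*} [mΩ : MeasurableSpace Ω]
    (P : Θ → Measure Ω) (hP : ∀ θ, IsProbabilityMeasure (P θ))
    (hac : ∀ θ θ', P θ ≪ P θ')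
    (mSuff mAnc : MeasurableSpace Ω) (hSle : mSuff ≤ mΩ) (hAle : mAnc ≤ mΩ)
    -- sufficiency of mSuff
    (hsuff : ∀ f : Ω → ℝ, Measurable f → (∃ C, ∀ ω, |f ω| ≤ C) →
      ∃ g : Ω → ℝ, StronglyMeasurable[mSuff] g ∧ ∀ θ, (P θ)[f | mSuff] =ᵐ[P θ] g)
    -- bounded completeness of mSuff
    (hcomplete : ∀ Y : Ω → ℝ, Measurable[mSuff] Y → (∃ C, ∀ ω, |Y ω| ≤ C) →
      (∀ θ, ∫ ω, Y ω ∂(P θ) = 0) → ∀ θ, Y =ᵐ[P θ] (0 : Ω → ℝ))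
    -- σ(mSuff ∪ mAnc) = mΩ
    (hgen : mSuff ⊔ mAnc = mΩ) :
    ∀ m' : MeasurableSpace Ω, m' ≤ mΩ → mAnc ≤ m' →
      (∀ s, MeasurableSet[m'] s → ∀ θ θ', P θ s = P θ' s) →
      ∀ s, MeasurableSet[m'] s →
        ∃ t, MeasurableSet[mAnc] t ∧ ∀ θ, P θ (s ∆ t) = 0 := by
  have := hP
  -- not found by instance search, which would use the last `MeasurableSpace Ω` in scope, `mAnc`
  have : ∀ θ, IsFiniteMeasure (P θ) := fun θ => ⟨(hP θ).measure_univ ▸ ENNReal.one_lt_top⟩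
  have hcommon : ∀ u, MeasurableSet[mΩ] u → HasCommonCondProb mSuff P u := by
    refine fun u hu => HasCommonCondProb.of_sup hSle hgen (fun B hB => ?_) hu
    have hB_bdd : ∃ C, ∀ ω, |B.indicator (1 : Ω → ℝ) ω| ≤ C :=
      ⟨1, fun ω => by by_cases h : ω ∈ B <;> simp [h]⟩
    obtain ⟨g, hg, hcond⟩ := hsuff _ (measurable_const.indicator hB) hB_bdd
    exact .of_condExp_ae_eq hSle (hAle B hB) hg hcond
  intro m' hm'le hm'ge hm'anc s hs
  rcases isEmpty_or_nonempty Θ with hΘ | ⟨⟨θ₀⟩⟩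
  · exact ⟨∅, @MeasurableSet.empty _ mAnc, isEmptyElim⟩
  have hind : Indep m' mSuff (P θ₀) :=
    indep_of_boundedlyComplete hSle hcomplete hm'anc (fun B hB => hcommon B (hm'le B hB)) θ₀
  obtain ⟨t, ht, hnull⟩ :=
    exists_measurableSet_measure_symmDiff_eq_zero_of_indep (μ := P θ₀) hm'ge hm'le hgen hind hs
  exact ⟨t, ht, fun θ => hac θ θ₀ hnull⟩

/-- Basu's third theorem (maximal ancillarity criterion) for families of mutually
absolutely continuous probability measures: if `mSuff` is boundedly complete and
sufficient, `mAnc` is ancillary, contains all null sets, and `mSuff ⊔ mAnc` is the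
whole σ-field, then `mAnc` is maximal ancillary: every ancillary sub-σ-field
containing `mAnc` coincides with it up to null sets. -/
theorem basu_third_theorem
    {Ω Θ : Type*} [mΩ : MeasurableSpace Ω]
    (P : Θ → Measure Ω) (hP : ∀ θ, IsProbabilityMeasure (P θ))
    (hac : ∀ θ θ', P θ ≪ P θ')
    (mSuff mAnc : MeasurableSpace Ω) (hSle : mSuff ≤ mΩ) (hAle : mAnc ≤ mΩ)
    -- sufficiency of mSuff
    (hsuff : ∀ f : Ω → ℝ, Measurable f → (∃ C, ∀ ω, |f ω| ≤ C) →
      ∃ g : Ω → ℝ, StronglyMeasurable[mSuff] g ∧ ∀ θ, (P θ)[f | mSuff] =ᵐ[P θ] g)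
    -- bounded completeness of mSuff
    (hcomplete : ∀ Y : Ω → ℝ, Measurable[mSuff] Y → (∃ C, ∀ ω, |Y ω| ≤ C) →
      (∀ θ, ∫ ω, Y ω ∂(P θ) = 0) → ∀ θ, Y =ᵐ[P θ] (0 : Ω → ℝ))
    -- ancillarity of mAnc
    (hanc : ∀ s, MeasurableSet[mAnc] s → ∀ θ θ', P θ s = P θ' s)
    -- mAnc contains all 𝒫-null sets
    (hnull : ∀ s, MeasurableSet[mΩ] s → (∀ θ, P θ s = 0) → MeasurableSet[mAnc] s)
    -- σ(mSuff ∪ mAnc) = mΩ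
    (hgen : mSuff ⊔ mAnc = mΩ) :
    ∀ m' : MeasurableSpace Ω, m' ≤ mΩ → mAnc ≤ m' →
      (∀ s, MeasurableSet[m'] s → ∀ θ θ', P θ s = P θ' s) →
      ∀ s, MeasurableSet[m'] s →
        ∃ t, MeasurableSet[mAnc] t ∧ ∀ θ, P θ (s ∆ t) = 0 :=
  basu_third_theorem_general (mΩ := mΩ) P hP hac mSuff mAnc hSle hAle hsuff hcomplete hgen
end
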